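/- arXiv:2405.01716 — 3 statements merged into one kernel-verified Lean document; each statement's English description precedes it below -/
import Mathlib

section
/- Let X be a finite nonempty record space, Θ an output type, n ≥ 1, and let M : (Fin n → X) → PMF Θ be a mechanism. Fix a prior π : PMF X, a loss function ℓ : X → X → ℝ≥0, a threshold η ≥ 0, and γ ≥ 0. If M is (η, γ)-ReRo with respect to π and ℓ, then M is (η, n·γ)-BCDistReRo with respect to π and ℓ. -/
open scoped ENNReal NNReal BigOperators
open Function

/-- Probability that the output of a PMF lands in a set. -/
noncomputable def pmfPr {Θ : Type*} (p : PMF Θ) (S : Set Θ) : ℝ≥0∞ :=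
  p.toOuterMeasure S

/-- Probability weight of a dataset `D` under `n` i.i.d. draws from the prior `π`. -/
noncomputable def iidWeight {X : Type*} {n : ℕ} (π : PMF X) (D : Fin n → X) : ℝ≥0∞ :=
  ∏ i, π (D i)

/-- `(η, γ)`-reconstruction robustness (ReRo): for every coordinate `i`, every fixing
of the other `n-1` records, and every adversary `A`, the probability over the target
`z ~ π` placed at coordinate `i` and `θ ~ M(D[i ↦ z])` that `ℓ z (A θ) ≤ η`
is at most `γ`. -/
def ReRo {X Θ : Type*} [Fintype X] {n : ℕ} (M : (Fin n → X) → PMF Θ)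
    (π : PMF X) (ℓ : X → X → ℝ≥0) (η : ℝ≥0) (γ : ℝ≥0∞) : Prop :=
  ∀ (i : Fin n) (D : Fin n → X) (A : Θ → X),
    ∑ z : X, π z * pmfPr (M (Function.update D i z)) {θ | ℓ z (A θ) ≤ η} ≤ γ

/-- `(η, γ)`-best-case distributional reconstruction robustness (BCDistReRo):
for every adversary `A`, the probability over `D ~ π^n` and `θ ~ M(D)` that the
minimum over coordinates `i` of `ℓ (D i) (A θ)` is at most `η` is bounded by `γ`. -/
def BCDistReRo {X Θ : Type*} [Fintype X] {n : ℕ} (M : (Fin n → X) → PMF Θ)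
    (π : PMF X) (ℓ : X → X → ℝ≥0) (η : ℝ≥0) (γ : ℝ≥0∞) : Prop :=
  ∀ A : Θ → X,
    ∑ D : Fin n → X, iidWeight π D * pmfPr (M D) {θ | ∃ i, ℓ (D i) (A θ) ≤ η} ≤ γ

/-- `(η, γ)`-average distributional reconstruction robustness (AvgDistReRo):
for every adversary `A`, the probability over `D ~ π^n`, `θ ~ M(D)`, and a uniformly
random index `i` that `ℓ (D i) (A θ) ≤ η` is at most `γ`. -/
def AvgDistReRo {X Θ : Type*} [Fintype X] {n : ℕ} (M : (Fin n → X) → PMF Θ)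
    (π : PMF X) (ℓ : X → X → ℝ≥0) (η : ℝ≥0) (γ : ℝ≥0∞) : Prop :=
  ∀ A : Θ → X,
    (n : ℝ≥0∞)⁻¹ * ∑ i : Fin n, ∑ D : Fin n → X,
      iidWeight π D * pmfPr (M D) {θ | ℓ (D i) (A θ) ≤ η} ≤ γ

/-- `ε`-differential privacy: on any pair of datasets differing in at most one
coordinate, the output distributions differ multiplicatively by at most `exp ε`. -/
def DiffPrivate {X Θ : Type*} {n : ℕ} (M : (Fin n → X) → PMF Θ) (ε : ℝ) : Prop :=
  ∀ x x' : Fin n → X, (∃ i : Fin n, ∀ j : Fin n, j ≠ i → x j = x' j) →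
    ∀ S : Set Θ, pmfPr (M x) S ≤ ENNReal.ofReal (Real.exp ε) * pmfPr (M x') S

/-- The baseline error `κ_{π,ℓ}(η) = sup_{z0} Pr_{x ~ π}[ℓ(x, z0) ≤ η]`. -/
noncomputable def baseline {X : Type*} (π : PMF X) (ℓ : X → X → ℝ≥0) (η : ℝ≥0) : ℝ≥0∞ :=
  ⨆ z0 : X, pmfPr π {x | ℓ x z0 ≤ η}

/-! The event that the adversary reconstructs *some* record is the union over `i` of the events
that it reconstructs record `i`, so by the union bound it suffices to bound each of these `n`
events by `γ`. For a fixed `i`, resampling coordinate `i` of `D ~ π^n` from `π` leaves the law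
of `D` unchanged, so the probability of reconstructing record `i` is an average, over the other
records, of exactly the quantities that ReRo bounds by `γ`. -/

lemma pmfPr_setOf_exists_le {Θ ι : Type*} [Fintype ι] (p : PMF Θ) (P : ι → Θ → Prop) :
    pmfPr p {θ | ∃ i, P i θ} ≤ ∑ i, pmfPr p {θ | P i θ} := by
  simpa only [pmfPr, Set.ofPred_exists] using
    MeasureTheory.measure_iUnion_fintype_le p.toOuterMeasure fun i => {θ | P i θ}

lemma PMF.sum_coe_fintype {X : Type*} [Fintype X] (p : PMF X) : ∑ x, p x = 1 := by
  rw [← tsum_fintype (L := .unconditional X), p.tsum_coe]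

section iidWeight

variable {X : Type*} {n : ℕ} (π : PMF X)

lemma sum_iidWeight [Fintype X] : ∑ D : Fin n → X, iidWeight π D = 1 := by
  simp only [iidWeight, ← Fintype.prod_sum, π.sum_coe_fintype, Finset.prod_const_one]

lemma iidWeight_mul_eq_iidWeight_update_mul (D : Fin n → X) (i : Fin n) (z : X) :
    iidWeight π D * π z = iidWeight π (Function.update D i z) * π (D i) := by
  have hupdate : iidWeight π (Function.update D i z) = π z * ∏ j ∈ Finset.univ.erase i, π (D j) := by
    rw [iidWeight, ← Finset.sdiff_singleton_eq_erase, ← Finset.prod_update_of_mem (Finset.mem_univ i)]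
    simp only [Function.apply_update (fun _ => π)]
  rw [hupdate, iidWeight, ← Finset.mul_prod_erase _ _ (Finset.mem_univ i)]
  ring

lemma sum_iidWeight_mul_sum_update [Fintype X] (i : Fin n) (F : (Fin n → X) → ℝ≥0∞) :
    ∑ D, iidWeight π D * ∑ z, π z * F (Function.update D i z) = ∑ D, iidWeight π D * F D := by
  -- `(D, z) ↦ (D[i ↦ z], D i)` is an involution exchanging the weights `π^n(D) π(z)` and
  -- `π^n(D[i ↦ z]) π(D i)`.
  let e : Equiv.Perm ((Fin n → X) × X) := Function.Involutive.toPerm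
    (fun p => (Function.update p.1 i p.2, p.1 i)) fun p => by simp
  let G : (Fin n → X) × X → ℝ≥0∞ := fun p => iidWeight π p.1 * π p.2 * F p.1
  calc ∑ D, iidWeight π D * ∑ z, π z * F (Function.update D i z)
      = ∑ p, G (e p) := by
        simp only [Finset.mul_sum, ← Fintype.sum_prod_type', ← mul_assoc]
        exact Finset.sum_congr rfl fun p _ => by
          rw [iidWeight_mul_eq_iidWeight_update_mul π p.1 i p.2]; rfl
    _ = ∑ p, G p := Equiv.sum_comp e G
    _ = ∑ D, iidWeight π D * F D := by
        simp only [G, Fintype.sum_prod_type, mul_right_comm _ _ (F _), ← Finset.mul_sum,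
          π.sum_coe_fintype, mul_one]

end iidWeight

lemma ReRo.sum_iidWeight_mul_pmfPr_le {X Θ : Type*} [Fintype X] {n : ℕ}
    {M : (Fin n → X) → PMF Θ} {π : PMF X} {ℓ : X → X → ℝ≥0} {η : ℝ≥0} {γ : ℝ≥0∞}
    (hM : ReRo M π ℓ η γ) (i : Fin n) (A : Θ → X) :
    ∑ D, iidWeight π D * pmfPr (M D) {θ | ℓ (D i) (A θ) ≤ η} ≤ γ :=
  calc ∑ D, iidWeight π D * pmfPr (M D) {θ | ℓ (D i) (A θ) ≤ η}
      = ∑ D, iidWeight π D * ∑ z, π z * pmfPr (M (Function.update D i z)) {θ | ℓ z (A θ) ≤ η} := by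
        simpa only [Function.update_self] using
          (sum_iidWeight_mul_sum_update π i fun D => pmfPr (M D) {θ | ℓ (D i) (A θ) ≤ η}).symm
    _ ≤ ∑ D, iidWeight π D * γ := by gcongr with D; exact hM i D A
    _ = γ := by rw [← Finset.sum_mul, sum_iidWeight, one_mul]

theorem rero_to_bcdistrero_general {X Θ : Type*} [Fintype X] {n : ℕ}
    (M : (Fin n → X) → PMF Θ) (π : PMF X) (ℓ : X → X → ℝ≥0) (η : ℝ≥0) (γ : ℝ≥0∞)
    (hM : ReRo M π ℓ η γ) :
    BCDistReRo M π ℓ η ((n : ℝ≥0∞) * γ) := by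
  intro A
  calc ∑ D, iidWeight π D * pmfPr (M D) {θ | ∃ i, ℓ (D i) (A θ) ≤ η}
      ≤ ∑ D, iidWeight π D * ∑ i, pmfPr (M D) {θ | ℓ (D i) (A θ) ≤ η} := by
        gcongr with D; exact pmfPr_setOf_exists_le _ _
    _ = ∑ i, ∑ D, iidWeight π D * pmfPr (M D) {θ | ℓ (D i) (A θ) ≤ η} := by
        simp only [Finset.mul_sum]; exact Finset.sum_comm
    _ ≤ ∑ _i : Fin n, γ := Finset.sum_le_sum fun i _ => hM.sum_iidWeight_mul_pmfPr_le i A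
    _ = n * γ := by simp

/-- If `M` is `(η, γ)`-ReRo w.r.t. `π` and `ℓ`, then `M` is
`(η, n·γ)`-BCDistReRo w.r.t. `π` and `ℓ`. -/
theorem rero_to_bcdistrero {X Θ : Type*} [Fintype X] [Nonempty X] {n : ℕ} (hn : 1 ≤ n)
    (M : (Fin n → X) → PMF Θ) (π : PMF X) (ℓ : X → X → ℝ≥0) (η : ℝ≥0) (γ : ℝ≥0∞)
    (hM : ReRo M π ℓ η γ) :
    BCDistReRo M π ℓ η ((n : ℝ≥0∞) * γ) :=
  rero_to_bcdistrero_general M π ℓ η γ hM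
end

section
/- Let X be a finite nonempty record space, Θ an output type, n ≥ 1, and let M : (Fin n → X) → PMF Θ be a mechanism. Fix a prior π : PMF X, a loss function ℓ : X → X → ℝ≥0, a threshold η ≥ 0, and let κ = sup_{z0 ∈ X} Pr_{x ~ π}[ℓ(x, z0) ≤ η] be the baseline error. If M is ε-differentially private, then M is (η, γ)-AvgDistReRo with respect to π and ℓ for γ = exp(ε) · κ. -/
open scoped ENNReal NNReal BigOperators
open Function

/-!
Fix a coordinate `i` and the other records. Differential privacy replaces the target record
`z ~ π` by any fixed record at a multiplicative cost `exp ε`; afterwards the output is independent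
of `z`, so the adversary succeeds with probability at most that of a fresh draw from `π` landing
within `η` of a fixed guess, i.e. `κ`. Averaging this bound over the other records (resampling
coordinate `i` of an i.i.d. sample leaves its law unchanged) and over `i` gives the claim.
-/

section

variable {X Θ ι : Type*}

theorem PMF.sum_coe [Fintype X] (π : PMF X) : ∑ x, π x = 1 := by
  rw [← tsum_fintype (L := .unconditional X), π.tsum_coe]

theorem PMF.sum_prod_coe_eq_one [Fintype ι] [DecidableEq ι] [Fintype X] (π : PMF X) :
    ∑ D : ι → X, ∏ j, π (D j) = 1 := by
  rw [← Fintype.prod_sum (fun (_ : ι) x => π x)]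
  simp [π.sum_coe]

theorem PMF.prod_update_mul [Fintype ι] [DecidableEq ι] (π : PMF X) (D : ι → X)
    (i : ι) (z : X) : (∏ j, π (update D i z j)) * π (D i) = (∏ j, π (D j)) * π z := by
  rw [Fintype.prod_eq_mul_prod_compl i, Fintype.prod_eq_mul_prod_compl i (fun j => π (D j)),
    update_self, Finset.prod_congr rfl fun j hj => by
      rw [update_of_ne (by simpa using hj)]]
  ring

theorem PMF.sum_prod_mul_eq_sum_prod_mul_sum_update [Fintype ι] [DecidableEq ι]
    [Fintype X] (π : PMF X) (i : ι) (F : (ι → X) → ℝ≥0∞) :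
    ∑ D : ι → X, (∏ j, π (D j)) * F D
      = ∑ D : ι → X, (∏ j, π (D j)) * ∑ z, π z * F (update D i z) := by
  -- `(D, z) ↦ (D[i ↦ z], D i)` is an involution preserving the weight `π^ι(D) π(z)`.
  let swap : (ι → X) × X → (ι → X) × X := fun p => (update p.1 i p.2, p.1 i)
  have hswap : Involutive swap := fun p => by simp [swap]
  calc ∑ D : ι → X, (∏ j, π (D j)) * F D
      = ∑ p : (ι → X) × X, (∏ j, π (p.1 j)) * π p.2 * F p.1 := by
        simp_rw [Fintype.sum_prod_type, mul_right_comm _ _ (F _), ← Finset.mul_sum,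
          π.sum_coe, mul_one]
    _ = ∑ p : (ι → X) × X, (∏ j, π (p.1 j)) * π p.2 * F (update p.1 i p.2) := by
        rw [← Equiv.sum_comp (hswap.toPerm swap)]
        refine Finset.sum_congr rfl fun p _ => ?_
        simp [swap, π.prod_update_mul]
    _ = _ := by
        simp_rw [Fintype.sum_prod_type, Finset.mul_sum, mul_assoc]

theorem sum_mul_pmfPr_le_iSup [Fintype X] (π : PMF X) (p : PMF Θ) (S : X → Set Θ) :
    ∑ z, π z * pmfPr p (S z) ≤ ⨆ θ, pmfPr π {z | θ ∈ S z} := by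
  classical
  calc ∑ z, π z * pmfPr p (S z)
      = ∑' θ, p θ * pmfPr π {z | θ ∈ S z} := by
        simp only [pmfPr, PMF.toOuterMeasure_apply]
        simp only [tsum_fintype, ← ENNReal.tsum_mul_left, Finset.mul_sum]
        rw [← Summable.tsum_finsetSum fun _ _ => ENNReal.summable]
        refine tsum_congr fun θ => Finset.sum_congr rfl fun z _ => ?_
        simp only [Set.indicator_apply, Set.mem_ofPred_eq, mul_ite, mul_zero]
        exact if_congr Iff.rfl (mul_comm _ _) rfl
    _ ≤ ∑' θ, p θ * ⨆ θ, pmfPr π {z | θ ∈ S z} :=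
        ENNReal.tsum_le_tsum fun θ =>
          mul_le_mul_right (le_iSup (fun θ => pmfPr π {z | θ ∈ S z}) θ) _
    _ = ⨆ θ, pmfPr π {z | θ ∈ S z} := by rw [ENNReal.tsum_mul_right, p.tsum_coe, one_mul]

theorem ENNReal.inv_natCast_mul_sum_le {n : ℕ} {f : Fin n → ℝ≥0∞} {c : ℝ≥0∞}
    (hf : ∀ i, f i ≤ c) : (n : ℝ≥0∞)⁻¹ * ∑ i, f i ≤ c := by
  rcases Nat.eq_zero_or_pos n with rfl | hn
  · simp
  rw [ENNReal.inv_mul_le_iff (by simpa using hn.ne') (ENNReal.natCast_ne_top n)]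
  simpa using Finset.sum_le_card_nsmul Finset.univ f c fun i _ => hf i

end

section

variable {X Θ : Type*} [Fintype X] {n : ℕ} {M : (Fin n → X) → PMF Θ} {ε : ℝ}

theorem sum_mul_pmfPr_le_baseline (π : PMF X) (ℓ : X → X → ℝ≥0) (η : ℝ≥0) (p : PMF Θ)
    (A : Θ → X) : ∑ z, π z * pmfPr p {θ | ℓ z (A θ) ≤ η} ≤ baseline π ℓ η :=
  (sum_mul_pmfPr_le_iSup π p _).trans <| iSup_le fun θ =>
    le_iSup (fun z0 => pmfPr π {x | ℓ x z0 ≤ η}) (A θ)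

theorem DiffPrivate.reRo (hM : DiffPrivate M ε) (π : PMF X) (ℓ : X → X → ℝ≥0) (η : ℝ≥0) :
    ReRo M π ℓ η (ENNReal.ofReal (Real.exp ε) * baseline π ℓ η) := by
  intro i D A
  calc ∑ z, π z * pmfPr (M (update D i z)) {θ | ℓ z (A θ) ≤ η}
      ≤ ∑ z, π z * (ENNReal.ofReal (Real.exp ε) * pmfPr (M D) {θ | ℓ z (A θ) ≤ η}) := by
        refine Finset.sum_le_sum fun z _ => mul_le_mul_right (hM _ _ ⟨i, fun j hj => ?_⟩ _) _
        exact update_of_ne hj z D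
    _ = ENNReal.ofReal (Real.exp ε) * ∑ z, π z * pmfPr (M D) {θ | ℓ z (A θ) ≤ η} := by
        simp_rw [Finset.mul_sum, mul_left_comm]
    _ ≤ ENNReal.ofReal (Real.exp ε) * baseline π ℓ η :=
        mul_le_mul_right (sum_mul_pmfPr_le_baseline π ℓ η (M D) A) _

theorem ReRo.avgDistReRo {π : PMF X} {ℓ : X → X → ℝ≥0} {η : ℝ≥0} {γ : ℝ≥0∞}
    (h : ReRo M π ℓ η γ) : AvgDistReRo M π ℓ η γ := by
  intro A
  refine ENNReal.inv_natCast_mul_sum_le fun i => ?_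
  calc ∑ D, iidWeight π D * pmfPr (M D) {θ | ℓ (D i) (A θ) ≤ η}
      = ∑ D, iidWeight π D * ∑ z, π z * pmfPr (M (update D i z)) {θ | ℓ z (A θ) ≤ η} := by
        simpa only [iidWeight, update_self] using π.sum_prod_mul_eq_sum_prod_mul_sum_update i
          fun D => pmfPr (M D) {θ | ℓ (D i) (A θ) ≤ η}
    _ ≤ ∑ D, iidWeight π D * γ := Finset.sum_le_sum fun D _ => mul_le_mul_right (h i D A) _
    _ = γ := by
        rw [← Finset.sum_mul]
        simp only [iidWeight, π.sum_prod_coe_eq_one, one_mul]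

end

theorem dp_to_avgdistrero_general {X Θ : Type*} [Fintype X] {n : ℕ}
    (M : (Fin n → X) → PMF Θ) (π : PMF X) (ℓ : X → X → ℝ≥0) (η : ℝ≥0) (ε : ℝ)
    (hM : DiffPrivate M ε) :
    AvgDistReRo M π ℓ η (ENNReal.ofReal (Real.exp ε) * baseline π ℓ η) :=
  (hM.reRo π ℓ η).avgDistReRo

/-- If `M` is `ε`-differentially private, then `M` is
`(η, exp ε · κ)`-AvgDistReRo, where `κ` is the baseline error. -/
theorem dp_to_avgdistrero {X Θ : Type*} [Fintype X] [Nonempty X] {n : ℕ} (hn : 1 ≤ n)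
    (M : (Fin n → X) → PMF Θ) (π : PMF X) (ℓ : X → X → ℝ≥0) (η : ℝ≥0) (ε : ℝ)
    (hM : DiffPrivate M ε) :
    AvgDistReRo M π ℓ η (ENNReal.ofReal (Real.exp ε) * baseline π ℓ η) :=
  dp_to_avgdistrero_general M π ℓ η ε hM
end

section
/- For every n ≥ 2 and k ≥ 1 there exist a mechanism M : (Fin n → X) → PMF Θ with record space X = (Fin k → Bool), output space Θ = Option X, the uniform prior π on X, and the exact-match loss ℓ(x, z) = (0 if x = z, else 1) with threshold η = 0, such that: (a) M is (0, 1/2^k + n/2^{(n−1)k})-AvgDistReRo with respect to π and ℓ, but (b) M is not (0, γ)-ReRo with respect to π and ℓ for any γ < 1. -/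
/-!
The mechanism publishes the first record exactly when all other records equal a fixed string `c`,
and outputs `none` otherwise. Fixing the other records to `c` makes the first record fully
reconstructible, so the mechanism is not ReRo for any `γ < 1`. On a random dataset, though, an
adversary guessing `D i` succeeds only if it guesses right from the output `none` (probability
`2⁻ᵏ`) or if the other records happen to equal `c` (probability `2^{-(n-1)k}`).
-/

open scoped ENNReal NNReal BigOperators
open Function

section Iid

variable {X : Type*} {n : ℕ}

lemma sum_piFinset_iidWeight (π : PMF X) (t : Fin n → Finset X) :
    ∑ D ∈ Fintype.piFinset t, iidWeight π D = ∏ j, ∑ x ∈ t j, π x :=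
  (Finset.prod_univ_sum t _).symm

variable [Fintype X]

lemma PMF.sum_coe_univ (π : PMF X) : ∑ x, π x = 1 := by
  rw [← tsum_fintype (L := .unconditional _), π.tsum_coe]

variable [DecidableEq X]

lemma sum_iidWeight_filter_apply_eq (π : PMF X) (i : Fin n) (a : X) :
    ∑ D with D i = a, iidWeight π D = π a := by
  have hfilter : ({D | D i = a} : Finset (Fin n → X)) =
      Fintype.piFinset (Function.update (fun _ => (Finset.univ : Finset X)) i {a}) := by
    ext D
    simp only [Finset.mem_filter, Finset.mem_univ, true_and, Fintype.mem_piFinset]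
    refine ⟨fun h j => ?_, fun h => by simpa using h i⟩
    rcases eq_or_ne j i with rfl | hj <;> simp [*]
  rw [hfilter, sum_piFinset_iidWeight, Finset.prod_eq_single i]
  · simp
  · intro j _ hj
    simp [hj, π.sum_coe_univ]
  · simp

lemma sum_iidWeight_filter_forall_ne_eq (π : PMF X) (i₀ : Fin n) (c : X) :
    ∑ D with ∀ j ≠ i₀, D j = c, iidWeight π D = π c ^ (n - 1) := by
  have hfilter : ({D | ∀ j ≠ i₀, D j = c} : Finset (Fin n → X)) =
      Fintype.piFinset (Function.update (fun _ => ({c} : Finset X)) i₀ Finset.univ) := by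
    ext D
    simp only [Finset.mem_filter, Finset.mem_univ, true_and, Fintype.mem_piFinset]
    refine ⟨fun h j => ?_, fun h j hj => by simpa [hj] using h j⟩
    rcases eq_or_ne j i₀ with rfl | hj <;> simp [*]
  rw [hfilter, sum_piFinset_iidWeight, ← Finset.mul_prod_erase _ _ (Finset.mem_univ i₀)]
  rw [Finset.prod_congr rfl fun j hj => by rw [Function.update_of_ne (Finset.ne_of_mem_erase hj)]]
  simp [π.sum_coe_univ, Finset.card_erase_of_mem]

end Iid

section Criteria

variable {X Θ : Type*} [Fintype X] {n : ℕ} {M : (Fin n → X) → PMF Θ} {π : PMF X}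
  {ℓ : X → X → ℝ≥0} {η : ℝ≥0} {γ : ℝ≥0∞}

lemma avgDistReRo_of_forall_coord
    (h : ∀ (A : Θ → X) (i : Fin n),
      ∑ D : Fin n → X, iidWeight π D * pmfPr (M D) {θ | ℓ (D i) (A θ) ≤ η} ≤ γ) :
    AvgDistReRo M π ℓ η γ := by
  intro A
  rcases eq_or_ne n 0 with rfl | hn
  · simp
  calc (n : ℝ≥0∞)⁻¹ * ∑ i : Fin n, _ ≤ (n : ℝ≥0∞)⁻¹ * (n * γ) := by
        gcongr
        simpa using Finset.sum_le_card_nsmul Finset.univ _ γ fun i _ => h A i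
    _ = γ := ENNReal.inv_mul_cancel_left (by simpa) (by simp)

lemma AvgDistReRo.mono {γ' : ℝ≥0∞} (h : AvgDistReRo M π ℓ η γ) (hγ : γ ≤ γ') :
    AvgDistReRo M π ℓ η γ' :=
  fun A => (h A).trans hγ

lemma ReRo.one_le_of_support_subset (hR : ReRo M π ℓ η γ) (i : Fin n) (D : Fin n → X)
    (A : Θ → X) (hA : ∀ z, (M (Function.update D i z)).support ⊆ {θ | ℓ z (A θ) ≤ η}) :
    1 ≤ γ := by
  have hcertain (z : X) : pmfPr (M (Function.update D i z)) {θ | ℓ z (A θ) ≤ η} = 1 :=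
    ((M _).toOuterMeasure_apply_eq_one_iff _).mpr (hA z)
  simpa [hcertain, π.sum_coe_univ] using hR i D A

end Criteria

section RevealMechanism

lemma setOf_exactMatch_le_zero {X Θ : Type*} [DecidableEq X] (x : X) (f : Θ → X) :
    {θ | (if x = f θ then (0 : ℝ≥0) else 1) ≤ 0} = {θ | x = f θ} := by
  ext θ
  by_cases h : x = f θ <;> simp [h]

variable {X : Type*} [DecidableEq X] {n : ℕ}

noncomputable def revealIfOthersEq (i₀ : Fin n) (c : X) (D : Fin n → X) : PMF (Option X) :=
  PMF.pure (if ∀ j ≠ i₀, D j = c then some (D i₀) else none)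

lemma pmfPr_revealIfOthersEq_le (i₀ : Fin n) (c : X) (D : Fin n → X) (i : Fin n)
    (A : Option X → X) :
    pmfPr (revealIfOthersEq i₀ c D) {θ | D i = A θ} ≤
      (if D i = A none then 1 else 0) + (if ∀ j ≠ i₀, D j = c then 1 else 0) := by
  unfold pmfPr revealIfOthersEq
  rw [PMF.toOuterMeasure_pure_apply]
  split_ifs <;> simp_all

lemma avgDistReRo_revealIfOthersEq [Fintype X] (π : PMF X) {p : ℝ≥0∞} (hp : ∀ x, π x ≤ p)
    (i₀ : Fin n) (c : X) :
    AvgDistReRo (revealIfOthersEq i₀ c) π (fun x z => if x = z then 0 else 1) 0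
      (p + π c ^ (n - 1)) := by
  refine avgDistReRo_of_forall_coord fun A i => ?_
  calc ∑ D, iidWeight π D * pmfPr (revealIfOthersEq i₀ c D)
          {θ | (fun x z => if x = z then (0 : ℝ≥0) else 1) (D i) (A θ) ≤ 0}
      ≤ ∑ D, iidWeight π D * ((if D i = A none then 1 else 0) +
          (if ∀ j ≠ i₀, D j = c then 1 else 0)) := by
        gcongr with D
        rw [setOf_exactMatch_le_zero]
        exact pmfPr_revealIfOthersEq_le i₀ c D i A
    _ = π (A none) + π c ^ (n - 1) := by
        simp only [mul_add, mul_ite, mul_one, mul_zero]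
        rw [Finset.sum_add_distrib, ← Finset.sum_filter, ← Finset.sum_filter,
          sum_iidWeight_filter_apply_eq, sum_iidWeight_filter_forall_ne_eq]
    _ ≤ p + π c ^ (n - 1) := by gcongr; exact hp _

lemma revealIfOthersEq_support_subset (i₀ : Fin n) (c z : X) :
    (revealIfOthersEq i₀ c (Function.update (fun _ => c) i₀ z)).support ⊆
      {θ | (if z = θ.getD c then (0 : ℝ≥0) else 1) ≤ 0} := by
  have hothers : ∀ j ≠ i₀, Function.update (fun _ => c) i₀ z j = c :=
    fun j hj => Function.update_of_ne hj _ _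
  simp [revealIfOthersEq, if_pos hothers]

end RevealMechanism

lemma inv_two_pow_add_inv_two_pow_le (n k : ℕ) (hn : 1 ≤ n) :
    ((2 : ℝ≥0∞) ^ k)⁻¹ + ((2 : ℝ≥0∞) ^ k)⁻¹ ^ (n - 1) ≤
      1 / 2 ^ k + (n : ℝ≥0∞) / 2 ^ ((n - 1) * k) := by
  rw [one_div, div_eq_mul_inv, ← ENNReal.inv_pow, ← pow_mul, mul_comm k]
  gcongr
  exact le_mul_of_one_le_left zero_le (by exact_mod_cast hn)

theorem avgdistrero_not_rero_separation_general (n k : ℕ) (hn : 2 ≤ n) :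
    ∃ M : (Fin n → (Fin k → Bool)) → PMF (Option (Fin k → Bool)),
      AvgDistReRo M (PMF.uniformOfFintype (Fin k → Bool))
        (fun x z => if x = z then 0 else 1) 0
        (1 / 2 ^ k + (n : ℝ≥0∞) / 2 ^ ((n - 1) * k))
      ∧ ∀ γ : ℝ≥0∞, γ < 1 →
          ¬ ReRo M (PMF.uniformOfFintype (Fin k → Bool))
              (fun x z => if x = z then 0 else 1) 0 γ := by
  have huniform (x : Fin k → Bool) : PMF.uniformOfFintype (Fin k → Bool) x = (2 ^ k)⁻¹ := by
    simp [PMF.uniformOfFintype_apply]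
  let i₀ : Fin n := ⟨0, by omega⟩
  let c : Fin k → Bool := fun _ => false
  refine ⟨revealIfOthersEq i₀ c, ?_, fun γ hγ hR => ?_⟩
  · refine (avgDistReRo_revealIfOthersEq _ (fun x => (huniform x).le) i₀ c).mono ?_
    rw [huniform]
    exact inv_two_pow_add_inv_two_pow_le n k (by omega)
  · exact hγ.not_ge <| hR.one_le_of_support_subset i₀ (fun _ => c) (fun θ => θ.getD c)
      (revealIfOthersEq_support_subset i₀ c)

/-- For every `n ≥ 2` and `k ≥ 1` there exists a mechanism on
`k`-bit records that is `(0, 1/2^k + n/2^{(n-1)k})`-AvgDistReRo w.r.t. the uniform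
prior and exact-match loss, but is not `(0, γ)`-ReRo for any `γ < 1`. -/
theorem avgdistrero_not_rero_separation (n k : ℕ) (hn : 2 ≤ n) (hk : 1 ≤ k) :
    ∃ M : (Fin n → (Fin k → Bool)) → PMF (Option (Fin k → Bool)),
      AvgDistReRo M (PMF.uniformOfFintype (Fin k → Bool))
        (fun x z => if x = z then 0 else 1) 0
        (1 / 2 ^ k + (n : ℝ≥0∞) / 2 ^ ((n - 1) * k))
      ∧ ∀ γ : ℝ≥0∞, γ < 1 →
          ¬ ReRo M (PMF.uniformOfFintype (Fin k → Bool))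
              (fun x z => if x = z then 0 else 1) 0 γ :=
  avgdistrero_not_rero_separation_general n k hn
end
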